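/- Consider the generalized top-k selective gossiping trajectory with m ≥ 2 agents, n ≥ 1 candidates, and k ∈ [n], assume the connectivity graph G = ([m], E) is connected, and let X(∞) = lim_{t→∞} X(t) denote the (existing) entrywise limit. Fix {i₁,i₂} ∈ E. If for some candidate j ∈ [n] and some agent i ∈ [m] we have X_{ij}(∞) > α_{i₁i₂}, then j ∈ S^∞_{i₁′i₂′} for every edge {i₁′,i₂′} ∈ E. -/

import Mathlib

/-!
Fix an edge {a, b}. Candidates selected infinitely often on it end in consensus between `a` and
`b`, and `α_{ab}` is the least of their limits. If `k` such candidates all had limits above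
`α_{ab}`, the minimising candidate would eventually lie outside both top-`k` sets and would stop
being selected. Hence every candidate whose limit at `a` exceeds `α_{ab}` lies in `S^∞_{ab}`, and
`α_{ab}` bounds from above the minimum of `X_a(∞)` over any `k` candidates. As `S^∞_{ab}` has at
least `k` elements, edges sharing a vertex have equal thresholds, so `α` is constant on the
connected graph `G`; by consensus, a limit above `α` then spreads from agent to agent along edges.
-/

open Filter Topology

/-- The set of indices of the top-k entries of v: indices j for which fewer
than k entries of v are strictly greater than v j. -/
def topSet {n : ℕ} (k : ℕ) (v : Fin n → ℝ) : Set (Fin n) :=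
  {j | Set.ncard {l | v j < v l} < k}

namespace SimpleGraph

theorem Reachable.of_adj_imp {V : Type*} {G : SimpleGraph V} {P : V → Prop} {u v : V}
    (h : G.Reachable u v) (hP : ∀ a b, G.Adj a b → P a → P b) (hu : P u) : P v := by
  obtain ⟨w⟩ := h
  induction w with
  | nil => exact hu
  | cons hab _ ih => exact ih (hP _ _ hab hu)

end SimpleGraph

theorem le_ncard_setOf_frequently_mem {τ ι : Type*} [Finite ι] {F : Filter τ} [F.NeBot]
    {s : τ → Set ι} {k : ℕ} (h : ∀ t, k ≤ (s t).ncard) :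
    k ≤ {i | ∃ᶠ t in F, i ∈ s t}.ncard := by
  have hev : ∀ᶠ t in F, s t ⊆ {i | ∃ᶠ t in F, i ∈ s t} := by
    refine eventually_all.2 fun i => ?_
    by_cases hi : ∃ᶠ t in F, i ∈ s t
    · exact .of_forall fun _ _ => hi
    · exact (not_frequently.1 hi).mono fun _ hit hit' => absurd hit' hit
  obtain ⟨t, ht⟩ := hev.exists
  exact (h t).trans (Set.ncard_le_ncard ht)

section TopSet

variable {n k : ℕ} {v : Fin n → ℝ} {j l : Fin n}

theorem le_ncard_topSet (hkn : k ≤ n) (v : Fin n → ℝ) : k ≤ (topSet k v).ncard := by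
  by_contra! hlt
  have hcompl : (topSet k v)ᶜ.Nonempty := Set.nonempty_compl.2 fun h => by
    rw [h, Set.ncard_univ, Nat.card_eq_fintype_card, Fintype.card_fin] at hlt
    omega
  obtain ⟨j, hj, hmax⟩ := Set.exists_max_image _ v (Set.toFinite _) hcompl
  -- a maximiser of `v` outside the top set is beaten only by members of the top set
  refine hj (lt_of_le_of_lt (Set.ncard_le_ncard fun l hl => ?_) hlt)
  by_contra hl'
  exact (hmax l hl').not_gt hl

theorem apply_lt_of_notMem_topSet (hj : j ∉ topSet k v) (hl : l ∈ topSet k v) : v j < v l := by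
  by_contra! h
  exact hj (lt_of_le_of_lt (Set.ncard_le_ncard fun r hr => lt_of_le_of_lt h hr) hl)

theorem notMem_topSet_of_le_ncard {K : Set (Fin n)} (hK : K ⊆ {l | v j < v l})
    (hcard : k ≤ K.ncard) : j ∉ topSet k v :=
  fun hj => hj.not_ge (hcard.trans (Set.ncard_le_ncard hK))

end TopSet

section Selection

variable {τ : Type*} {n k : ℕ} {F : Filter τ} {u v : τ → Fin n → ℝ} {u' v' : Fin n → ℝ}

def frequentlySelected (F : Filter τ) (k : ℕ) (u v : τ → Fin n → ℝ) : Set (Fin n) :=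
  {j | ∃ᶠ t in F, j ∈ topSet k (u t) ∪ topSet k (v t)}

theorem le_ncard_frequentlySelected [F.NeBot] (hkn : k ≤ n) :
    k ≤ (frequentlySelected F k u v).ncard :=
  le_ncard_setOf_frequently_mem fun t =>
    (le_ncard_topSet hkn (u t)).trans (Set.ncard_le_ncard Set.subset_union_left)

theorem exists_le_sInf_of_subset_frequentlySelected (hk : 0 < k) (hu : Tendsto u F (𝓝 u'))
    (hv : Tendsto v F (𝓝 v')) (hcons : Set.EqOn u' v' (frequentlySelected F k u v))
    {K : Set (Fin n)} (hKA : K ⊆ frequentlySelected F k u v) (hK : k ≤ K.ncard) :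
    ∃ l ∈ K, u' l ≤ sInf (u' '' frequentlySelected F k u v) := by
  by_contra! hKgt
  have hKne : K.Nonempty := Set.nonempty_of_ncard_ne_zero (by omega)
  obtain ⟨j, hjA, hj⟩ := ((hKne.mono hKA).image u').csInf_mem (Set.toFinite _)
  -- the minimiser `j` eventually lies below all of `K` in both rows, so it drops out of selection
  have hev : ∀ᶠ t in F, ∀ l ∈ K, u t j < u t l ∧ v t j < v t l := by
    refine (eventually_all_finite K.toFinite).2 fun l hl => ?_
    have hlt : u' j < u' l := hj ▸ hKgt l hl
    exact ((tendsto_pi_nhds.1 hu j).eventually_lt (tendsto_pi_nhds.1 hu l) hlt).and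
      ((tendsto_pi_nhds.1 hv j).eventually_lt (tendsto_pi_nhds.1 hv l)
        (by rwa [← hcons hjA, ← hcons (hKA hl)]))
  refine hjA (hev.mono fun t ht hjt => ?_)
  rcases hjt with h | h
  · exact notMem_topSet_of_le_ncard (fun l hl => (ht l hl).1) hK h
  · exact notMem_topSet_of_le_ncard (fun l hl => (ht l hl).2) hK h

theorem mem_frequentlySelected_of_sInf_lt [F.NeBot] (hk : 0 < k) (hkn : k ≤ n)
    (hu : Tendsto u F (𝓝 u')) (hv : Tendsto v F (𝓝 v'))
    (hcons : Set.EqOn u' v' (frequentlySelected F k u v)) {j : Fin n}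
    (hj : sInf (u' '' frequentlySelected F k u v) < u' j) : j ∈ frequentlySelected F k u v := by
  by_contra hjA
  have hjout : ∀ᶠ t in F, j ∉ topSet k (u t) :=
    (not_frequently.1 hjA).mono fun _ h h' => h (Or.inl h')
  obtain ⟨l, hl, hle⟩ := exists_le_sInf_of_subset_frequentlySelected hk hu hv hcons
    (K := {l | ∃ᶠ t in F, l ∈ topSet k (u t)}) (fun _ hl => hl.mono fun _ => Or.inl)
    (le_ncard_setOf_frequently_mem fun t => le_ncard_topSet hkn (u t))
  have hjl : u' j ≤ u' l := le_of_tendsto_of_tendsto_of_frequently (tendsto_pi_nhds.1 hu j)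
    (tendsto_pi_nhds.1 hu l)
    ((hl.and_eventually hjout).mono fun _ ht => (apply_lt_of_notMem_topSet ht.2 ht.1).le)
  linarith

theorem sInf_image_le_of_le_ncard [F.NeBot] (hk : 0 < k) (hkn : k ≤ n)
    (hu : Tendsto u F (𝓝 u')) (hv : Tendsto v F (𝓝 v'))
    (hcons : Set.EqOn u' v' (frequentlySelected F k u v)) {B : Set (Fin n)} (hB : k ≤ B.ncard) :
    sInf (u' '' B) ≤ sInf (u' '' frequentlySelected F k u v) := by
  by_contra! hlt
  obtain ⟨l, hl, hle⟩ := exists_le_sInf_of_subset_frequentlySelected hk hu hv hcons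
    (fun l hl => mem_frequentlySelected_of_sInf_lt hk hkn hu hv hcons
      (hlt.trans_le (csInf_le (Set.toFinite _).bddBelow ⟨l, hl, rfl⟩))) hB
  exact (hle.trans_lt hlt).not_ge (csInf_le (Set.toFinite _).bddBelow ⟨l, hl, rfl⟩)

end Selection

section Gossip

variable {m n k : ℕ} {p q : ℕ → Fin m} {X : ℕ → Fin m → Fin n → ℝ} {S : ℕ → Set (Fin n)}
  {Xinf : Fin m → Fin n → ℝ}

-- The interaction times of the pair {a, b}, the paper's `S^∞_{ab}` and `α_{ab}`.
def edgeTimes (p q : ℕ → Fin m) (a b : Fin m) : Set ℕ :=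
  {t | (p t = a ∧ q t = b) ∨ (p t = b ∧ q t = a)}

def edgeCandidates (p q : ℕ → Fin m) (S : ℕ → Set (Fin n)) (a b : Fin m) : Set (Fin n) :=
  {j | {t | t ∈ edgeTimes p q a b ∧ j ∈ S t}.Infinite}

noncomputable def edgeThreshold (p q : ℕ → Fin m) (S : ℕ → Set (Fin n))
    (Xinf : Fin m → Fin n → ℝ) (a b : Fin m) : ℝ :=
  sInf (Xinf a '' edgeCandidates p q S a b)

def connectivityGraph (p q : ℕ → Fin m) : SimpleGraph (Fin m) :=
  SimpleGraph.fromRel fun a b => (edgeTimes p q a b).Infinite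

structure IsTopKGossip (k : ℕ) (p q : ℕ → Fin m) (X : ℕ → Fin m → Fin n → ℝ)
    (S : ℕ → Set (Fin n)) (Xinf : Fin m → Fin n → ℝ) : Prop where
  selected : ∀ t, S t = topSet k (X t (p t)) ∪ topSet k (X t (q t))
  average : ∀ t i j, (i = p t ∨ i = q t) → j ∈ S t →
    X (t + 1) i j = (X t (p t) j + X t (q t) j) / 2
  tendsto : ∀ i j, Tendsto (fun t => X t i j) atTop (𝓝 (Xinf i j))

theorem edgeTimes_comm (p q : ℕ → Fin m) (a b : Fin m) :
    edgeTimes p q a b = edgeTimes p q b a := by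
  ext t
  simp only [edgeTimes, Set.mem_ofPred_eq]
  tauto

theorem edgeCandidates_comm (p q : ℕ → Fin m) (S : ℕ → Set (Fin n)) (a b : Fin m) :
    edgeCandidates p q S a b = edgeCandidates p q S b a := by
  simp only [edgeCandidates, edgeTimes_comm p q a b]

theorem infinite_edgeTimes_of_adj {a b : Fin m} (h : (connectivityGraph p q).Adj a b) :
    (edgeTimes p q a b).Infinite := by
  rw [connectivityGraph, SimpleGraph.fromRel_adj, edgeTimes_comm p q b a, or_self] at h
  exact h.2

namespace IsTopKGossip

variable {a b c : Fin m}

theorem selected_eq (hG : IsTopKGossip k p q X S Xinf) {t : ℕ} (ht : t ∈ edgeTimes p q a b) :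
    S t = topSet k (X t a) ∪ topSet k (X t b) := by
  rcases ht with ⟨rfl, rfl⟩ | ⟨rfl, rfl⟩
  · exact hG.selected t
  · rw [hG.selected t, Set.union_comm]

theorem edgeCandidates_eq (hG : IsTopKGossip k p q X S Xinf) (a b : Fin m) :
    edgeCandidates p q S a b =
      frequentlySelected (cofinite ⊓ 𝓟 (edgeTimes p q a b)) k (X · a) (X · b) := by
  ext j
  have hsel : {t | t ∈ edgeTimes p q a b ∧ j ∈ S t} =
      {t | t ∈ edgeTimes p q a b ∧ j ∈ topSet k (X t a) ∪ topSet k (X t b)} :=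
    Set.ext fun t => and_congr_right fun ht => by rw [hG.selected_eq ht]
  rw [edgeCandidates, frequentlySelected, Set.mem_ofPred_eq, Set.mem_ofPred_eq, hsel,
    frequently_inf_principal, frequently_cofinite_iff_infinite]

theorem tendsto_row (hG : IsTopKGossip k p q X S Xinf) (a : Fin m) (s : Set ℕ) :
    Tendsto (fun t => X t a) (cofinite ⊓ 𝓟 s) (𝓝 (Xinf a)) :=
  (tendsto_pi_nhds.2 (hG.tendsto a)).mono_left (inf_le_left.trans Nat.cofinite_eq_atTop.le)

theorem eqOn_edgeCandidates (hG : IsTopKGossip k p q X S Xinf) (a b : Fin m) :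
    Set.EqOn (Xinf a) (Xinf b) (edgeCandidates p q S a b) := by
  intro j hj
  have := hj.cofinite_inf_principal_neBot
  have hshift (i : Fin m) : Tendsto (fun t => X (t + 1) i j)
      (cofinite ⊓ 𝓟 {t | t ∈ edgeTimes p q a b ∧ j ∈ S t}) (𝓝 (Xinf i j)) :=
    ((hG.tendsto i j).comp (tendsto_add_atTop_nat 1)).mono_left
      (inf_le_left.trans Nat.cofinite_eq_atTop.le)
  -- right after every joint update of `j`, both agents hold the same opinion on `j`
  refine tendsto_nhds_unique_of_eventuallyEq (hshift a) (hshift b)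
    (eventually_inf_principal.2 (.of_forall ?_))
  rintro t ⟨⟨rfl, rfl⟩ | ⟨rfl, rfl⟩, hjt⟩ <;> dsimp only <;>
    rw [hG.average t _ j (by simp) hjt, hG.average t _ j (by simp) hjt]

theorem edgeThreshold_comm (hG : IsTopKGossip k p q X S Xinf) (a b : Fin m) :
    edgeThreshold p q S Xinf a b = edgeThreshold p q S Xinf b a := by
  rw [edgeThreshold, edgeThreshold, edgeCandidates_comm p q S a b,
    Set.image_congr (hG.eqOn_edgeCandidates b a).symm]

theorem mem_edgeCandidates_of_edgeThreshold_lt (hG : IsTopKGossip k p q X S Xinf)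
    (hk : 0 < k) (hkn : k ≤ n) (hE : (edgeTimes p q a b).Infinite) {j : Fin n}
    (hj : edgeThreshold p q S Xinf a b < Xinf a j) : j ∈ edgeCandidates p q S a b := by
  have := hE.cofinite_inf_principal_neBot
  have hcons := hG.eqOn_edgeCandidates a b
  rw [edgeThreshold, hG.edgeCandidates_eq] at hj
  rw [hG.edgeCandidates_eq] at hcons ⊢
  exact mem_frequentlySelected_of_sInf_lt hk hkn (hG.tendsto_row a _) (hG.tendsto_row b _)
    hcons hj

theorem edgeThreshold_le_of_shared_vertex (hG : IsTopKGossip k p q X S Xinf) (hk : 0 < k)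
    (hkn : k ≤ n) (hab : (edgeTimes p q a b).Infinite) (hac : (edgeTimes p q a c).Infinite) :
    edgeThreshold p q S Xinf a b ≤ edgeThreshold p q S Xinf a c := by
  have := hab.cofinite_inf_principal_neBot
  have := hac.cofinite_inf_principal_neBot
  have hcons := hG.eqOn_edgeCandidates a c
  rw [hG.edgeCandidates_eq] at hcons
  rw [edgeThreshold, edgeThreshold, hG.edgeCandidates_eq a c]
  refine sInf_image_le_of_le_ncard hk hkn (hG.tendsto_row a _) (hG.tendsto_row c _) hcons ?_
  rw [hG.edgeCandidates_eq]
  exact le_ncard_frequentlySelected hkn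

theorem edgeThreshold_eq_of_shared_vertex (hG : IsTopKGossip k p q X S Xinf) (hk : 0 < k)
    (hkn : k ≤ n) (hab : (edgeTimes p q a b).Infinite) (hac : (edgeTimes p q a c).Infinite) :
    edgeThreshold p q S Xinf a b = edgeThreshold p q S Xinf a c :=
  (hG.edgeThreshold_le_of_shared_vertex hk hkn hab hac).antisymm
    (hG.edgeThreshold_le_of_shared_vertex hk hkn hac hab)

theorem edgeThreshold_eq_of_connected (hG : IsTopKGossip k p q X S Xinf) (hk : 0 < k)
    (hkn : k ≤ n) (hconn : (connectivityGraph p q).Connected)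
    (hab : (edgeTimes p q a b).Infinite) {c d : Fin m} (hcd : (edgeTimes p q c d).Infinite) :
    edgeThreshold p q S Xinf c d = edgeThreshold p q S Xinf a b := by
  refine (hconn.preconnected a c).of_adj_imp (P := fun u => ∀ v, (edgeTimes p q u v).Infinite →
    edgeThreshold p q S Xinf u v = edgeThreshold p q S Xinf a b) ?_
    (fun v hav => hG.edgeThreshold_eq_of_shared_vertex hk hkn hav hab) d hcd
  intro u w huw hu v hwv
  have hwu : (edgeTimes p q w u).Infinite := edgeTimes_comm p q u w ▸ infinite_edgeTimes_of_adj huw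
  rw [hG.edgeThreshold_eq_of_shared_vertex hk hkn hwv hwu, hG.edgeThreshold_comm,
    hu w (infinite_edgeTimes_of_adj huw)]

theorem edgeThreshold_lt_of_connected (hG : IsTopKGossip k p q X S Xinf) (hk : 0 < k)
    (hkn : k ≤ n) (hconn : (connectivityGraph p q).Connected)
    (hab : (edgeTimes p q a b).Infinite) {i : Fin m} {j : Fin n}
    (hi : edgeThreshold p q S Xinf a b < Xinf i j) (u : Fin m) :
    edgeThreshold p q S Xinf a b < Xinf u j := by
  refine (hconn.preconnected i u).of_adj_imp
    (P := fun v => edgeThreshold p q S Xinf a b < Xinf v j) (fun v w hvw hv => ?_) hi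
  have hvw' := infinite_edgeTimes_of_adj hvw
  rw [← hG.eqOn_edgeCandidates v w (hG.mem_edgeCandidates_of_edgeThreshold_lt hk hkn hvw'
    (hG.edgeThreshold_eq_of_connected hk hkn hconn hab hvw' ▸ hv))]
  exact hv

end IsTopKGossip

end Gossip

theorem stmt12_general (m n k : ℕ) (hk : 1 ≤ k) (hkn : k ≤ n)
    (p q : ℕ → Fin m)
    (X : ℕ → Fin m → Fin n → ℝ)
    (S : ℕ → Set (Fin n))
    (hS : ∀ t, S t = topSet k (X t (p t)) ∪ topSet k (X t (q t)))
    (hX1 : ∀ t (i : Fin m) (j : Fin n), (i = p t ∨ i = q t) → j ∈ S t →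
      X (t + 1) i j = (X t (p t) j + X t (q t) j) / 2)
    (hconn : (SimpleGraph.fromRel (fun a b =>
      {t : ℕ | (p t = a ∧ q t = b) ∨ (p t = b ∧ q t = a)}.Infinite)).Connected)
    (Xinf : Fin m → Fin n → ℝ)
    (hlim : ∀ (i : Fin m) (j : Fin n),
      Tendsto (fun t => X t i j) atTop (𝓝 (Xinf i j)))
    (i₁ i₂ : Fin m)
    (hE : {t : ℕ | (p t = i₁ ∧ q t = i₂) ∨ (p t = i₂ ∧ q t = i₁)}.Infinite)
    (α : ℝ)
    (hα : α = sInf ((fun j => Xinf i₁ j) '' {j : Fin n |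
      {t : ℕ | ((p t = i₁ ∧ q t = i₂) ∨ (p t = i₂ ∧ q t = i₁)) ∧
        j ∈ S t}.Infinite}))
    (j : Fin n) (i : Fin m) (hgt : α < Xinf i j) :
    ∀ i₁' i₂' : Fin m, i₁' ≠ i₂' →
      {t : ℕ | (p t = i₁' ∧ q t = i₂') ∨ (p t = i₂' ∧ q t = i₁')}.Infinite →
      j ∈ {j' : Fin n |
        {t : ℕ | ((p t = i₁' ∧ q t = i₂') ∨ (p t = i₂' ∧ q t = i₁')) ∧
          j' ∈ S t}.Infinite} := by
  intro i₁' i₂' _ hE'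
  have hG : IsTopKGossip k p q X S Xinf := ⟨hS, hX1, hlim⟩
  subst hα
  refine hG.mem_edgeCandidates_of_edgeThreshold_lt hk hkn hE' ?_
  rw [hG.edgeThreshold_eq_of_connected hk hkn hconn hE hE']
  exact hG.edgeThreshold_lt_of_connected hk hkn hconn hE hgt i₁'

/-- In the generalized top-k selective gossiping trajectory with
connected connectivity graph, fix an edge {i₁,i₂} and let
α_{i₁i₂} = min_{j ∈ S^∞_{i₁i₂}} X_{i₁j}(∞). If some agent's limiting opinion on
a candidate j exceeds α_{i₁i₂}, then j ∈ S^∞_{i₁'i₂'} for every edge {i₁',i₂'}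
of the connectivity graph. -/
theorem stmt12 (m n k : ℕ) (hm : 2 ≤ m) (hk : 1 ≤ k) (hkn : k ≤ n)
    (p q : ℕ → Fin m) (hpq : ∀ t, p t ≠ q t)
    (X : ℕ → Fin m → Fin n → ℝ)
    (S : ℕ → Set (Fin n))
    (hS : ∀ t, S t = topSet k (X t (p t)) ∪ topSet k (X t (q t)))
    (hX1 : ∀ t (i : Fin m) (j : Fin n), (i = p t ∨ i = q t) → j ∈ S t →
      X (t + 1) i j = (X t (p t) j + X t (q t) j) / 2)
    (hX2 : ∀ t (i : Fin m) (j : Fin n), ¬((i = p t ∨ i = q t) ∧ j ∈ S t) →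
      X (t + 1) i j = X t i j)
    (hconn : (SimpleGraph.fromRel (fun a b =>
      {t : ℕ | (p t = a ∧ q t = b) ∨ (p t = b ∧ q t = a)}.Infinite)).Connected)
    (Xinf : Fin m → Fin n → ℝ)
    (hlim : ∀ (i : Fin m) (j : Fin n),
      Tendsto (fun t => X t i j) atTop (𝓝 (Xinf i j)))
    (i₁ i₂ : Fin m) (hne : i₁ ≠ i₂)
    (hE : {t : ℕ | (p t = i₁ ∧ q t = i₂) ∨ (p t = i₂ ∧ q t = i₁)}.Infinite)
    (α : ℝ)
    (hα : α = sInf ((fun j => Xinf i₁ j) '' {j : Fin n |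
      {t : ℕ | ((p t = i₁ ∧ q t = i₂) ∨ (p t = i₂ ∧ q t = i₁)) ∧
        j ∈ S t}.Infinite}))
    (j : Fin n) (i : Fin m) (hgt : α < Xinf i j) :
    ∀ i₁' i₂' : Fin m, i₁' ≠ i₂' →
      {t : ℕ | (p t = i₁' ∧ q t = i₂') ∨ (p t = i₂' ∧ q t = i₁')}.Infinite →
      j ∈ {j' : Fin n |
        {t : ℕ | ((p t = i₁' ∧ q t = i₂') ∨ (p t = i₂' ∧ q t = i₁')) ∧
          j' ∈ S t}.Infinite} :=
  stmt12_general m n k hk hkn p q X S hS hX1 hconn Xinf hlim i₁ i₂ hE α hα j i hgt
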